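/- Let a ≥ 1, c ≥ 1, b ∈ ℝ, and h ∈ (0,1). Define q_{a,b,c} : ℝ → [0,∞) by q_{a,b,c}(x) = D₀⁻¹·exp(-x²/2) for |x| < 1, q_{a,b,c}(x) = 0 for 1 ≤ |x| < c, and q_{a,b,c}(x) = exp(-a·|x| + b) for |x| ≥ c; define S : ℝ → ℝ by S(x) = x for |x| < c, S(x) = (1-h)·x + a·h for x ≥ c, and S(x) = (1-h)·x - a·h for x ≤ -c. Then Measure.map S (volume.withDensity q_{a,b,c}) = volume.withDensity q_{a',b',c'}, where a' = a/(1-h), b' = b + a²·h/(1-h) - log(1-h), and c' = (1-h)·c + a·h; moreover a' > a ≥ 1 and c' ≥ 1. -/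

import Mathlib

open MeasureTheory

/-- The normalization constant `D₀ = ∫_{-1}^{1} exp(-x²/2) dx + 2 exp(-1/2)`. -/
noncomputable def D₀ : ℝ := (∫ x in (-1 : ℝ)..1, Real.exp (-x ^ 2 / 2)) + 2 * Real.exp (-1 / 2)

/-- The piecewise density of the forward-Euler iterates: Gaussian shape `D₀⁻¹ exp(-x²/2)`
on `|x| < 1`, vanishing on `1 ≤ |x| < c`, and exponential tail `exp(-a|x| + b)`
on `|x| ≥ c`. -/
noncomputable def q (a b c : ℝ) (x : ℝ) : ENNReal :=
  if |x| < 1 then ENNReal.ofReal (D₀⁻¹ * Real.exp (-x ^ 2 / 2))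
  else if |x| < c then 0
  else ENNReal.ofReal (Real.exp (-a * |x| + b))

/-- The forward-Euler pushforward map at a measure with density `q a b c`
(extended as the identity on the null region `1 ≤ |x| < c`). -/
noncomputable def S (a c h : ℝ) (x : ℝ) : ℝ :=
  if |x| < c then x else if c ≤ x then (1 - h) * x + a * h else (1 - h) * x - a * h

open Set
open scoped ENNReal

/-!
The density `q a b c` is the sum of three pieces: the Gaussian core on `|x| < 1`, where `S` is the
identity, and the two exponential tails on `x ≥ c` and `x ≤ -c`, on each of which `S` is an affine
map `x ↦ (1 - h) x ± a h` of slope `1 - h`. Pushing a density forward along such a map divides it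
by `1 - h`; since `|S x| = (1 - h) |x| + a h` on the tails, the tail `exp (-a |x| + b)` becomes
`exp (-a' |y| + b')`, the `-log (1 - h)` in `b'` absorbing the Jacobian.
-/

noncomputable def qCore (x : ℝ) : ℝ≥0∞ := ENNReal.ofReal (D₀⁻¹ * Real.exp (-x ^ 2 / 2))

noncomputable def qTail (a b x : ℝ) : ℝ≥0∞ := ENNReal.ofReal (Real.exp (-a * |x| + b))

lemma measurable_qCore : Measurable qCore :=
  ENNReal.measurable_ofReal.comp (by fun_prop)

lemma measurable_qTail (a b : ℝ) : Measurable (qTail a b) :=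
  ENNReal.measurable_ofReal.comp (by fun_prop)

lemma measurable_S (a c h : ℝ) : Measurable (S a c h) :=
  Measurable.ite (measurableSet_lt measurable_abs measurable_const) measurable_id <|
    Measurable.ite measurableSet_Ici (by fun_prop) (by fun_prop)

lemma measurableSet_abs_lt_one : MeasurableSet {x : ℝ | |x| < 1} :=
  measurableSet_lt measurable_abs measurable_const

lemma q_eq_indicator_add {c : ℝ} (a b : ℝ) (hc : 1 ≤ c) :
    q a b c = {x | |x| < 1}.indicator qCore + (Ici c).indicator (qTail a b)
      + (Iic (-c)).indicator (qTail a b) := by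
  funext x
  simp only [q, qCore, qTail, Pi.add_apply, indicator_apply, mem_ofPred_eq, mem_Ici, mem_Iic]
  rcases lt_or_ge |x| 1 with hx1 | hx1
  · have := abs_lt.mp hx1
    simp [hx1, show ¬ c ≤ x by linarith, show ¬ x ≤ -c by linarith]
  rcases lt_or_ge |x| c with hxc | hxc
  · have := abs_lt.mp hxc
    simp [hx1.not_gt, hxc, show ¬ c ≤ x by linarith, show ¬ x ≤ -c by linarith]
  rcases le_total 0 x with hx | hx
  · have hcx : c ≤ x := abs_of_nonneg hx ▸ hxc
    simp [hx1.not_gt, hxc.not_gt, hcx, show ¬ x ≤ -c by linarith]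
  · have hxc' : c ≤ -x := abs_of_nonpos hx ▸ hxc
    simp [hx1.not_gt, hxc.not_gt, show x ≤ -c by linarith, show ¬ c ≤ x by linarith]

lemma withDensity_add_add {α : Type*} [MeasurableSpace α] (μ : Measure α) {f g : α → ℝ≥0∞}
    (hf : Measurable f) (hg : Measurable g) (k : α → ℝ≥0∞) :
    μ.withDensity (f + g + k) = μ.withDensity f + μ.withDensity g + μ.withDensity k := by
  rw [withDensity_add_left (hf.add hg), withDensity_add_left hf]

lemma map_withDensity_indicator_congr {α β : Type*} [MeasurableSpace α] [MeasurableSpace β]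
    (μ : Measure α) {s : Set α} (hs : MeasurableSet s) (f : α → ℝ≥0∞) {T T' : α → β}
    (hT : EqOn T T' s) :
    (μ.withDensity (s.indicator f)).map T = (μ.withDensity (s.indicator f)).map T' := by
  rw [withDensity_indicator hs]
  refine Measure.map_congr ?_
  filter_upwards [(withDensity_absolutelyContinuous _ f).ae_le (ae_restrict_mem hs)] with x hx
  exact hT hx

lemma map_affine_volume {k : ℝ} (hk : 0 < k) (d : ℝ) :
    (volume : Measure ℝ).map (fun x => k * x + d) = ENNReal.ofReal k⁻¹ • volume := by
  rw [show (fun x : ℝ => k * x + d) = (· + d) ∘ (k * ·) from rfl,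
    ← Measure.map_map (measurable_add_const d) (measurable_const_mul k),
    Real.map_volume_mul_left hk.ne', Measure.map_smul, map_add_right_eq_self,
    abs_of_pos (inv_pos.mpr hk)]

lemma map_affine_withDensity {k : ℝ} (hk : 0 < k) (d : ℝ) {g : ℝ → ℝ≥0∞} (hg : Measurable g) :
    (volume.withDensity fun x => ENNReal.ofReal k * g (k * x + d)).map (fun x => k * x + d) =
      volume.withDensity g := by
  have hT : MeasurableEmbedding (fun x : ℝ => k * x + d) :=
    (affineHomeomorph k d hk.ne').toMeasurableEquiv.measurableEmbedding
  have hmap : (volume.withDensity (g ∘ fun x => k * x + d)).map (fun x => k * x + d) =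
      (volume.map fun x => k * x + d).withDensity g := by
    ext s hs
    rw [hT.map_apply, withDensity_apply _ (hT.measurable hs), withDensity_apply _ hs,
      setLIntegral_map hs hg hT.measurable]
    rfl
  rw [show (fun x => ENNReal.ofReal k * g (k * x + d)) = ENNReal.ofReal k • (g ∘ (k * · + d))
      from rfl, withDensity_smul _ (hg.comp hT.measurable), Measure.map_smul, hmap,
    map_affine_volume hk, withDensity_smul_measure, smul_smul, ← ENNReal.ofReal_mul hk.le,
    mul_inv_cancel₀ hk.ne', ENNReal.ofReal_one, one_smul]

lemma map_affine_withDensity_indicator {k : ℝ} (hk : 0 < k) (d : ℝ) {s t : Set ℝ}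
    {f g : ℝ → ℝ≥0∞} (hg : Measurable g) (ht : MeasurableSet t)
    (hst : ∀ x, k * x + d ∈ t ↔ x ∈ s) (hfg : ∀ x ∈ s, f x = ENNReal.ofReal k * g (k * x + d)) :
    (volume.withDensity (s.indicator f)).map (fun x => k * x + d) =
      volume.withDensity (t.indicator g) := by
  rw [← map_affine_withDensity hk d (hg.indicator ht)]
  congr 2
  funext x
  by_cases hx : x ∈ s
  · rw [indicator_of_mem hx, indicator_of_mem ((hst x).mpr hx), hfg x hx]
  · rw [indicator_of_notMem hx, indicator_of_notMem (mt (hst x).mp hx), mul_zero]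

lemma qTail_eq_ofReal_mul_qTail {a h x y : ℝ} (b : ℝ) (hh : h < 1)
    (hxy : |y| = (1 - h) * |x| + a * h) :
    qTail a b x = ENNReal.ofReal (1 - h) *
      qTail (a / (1 - h)) (b + a ^ 2 * h / (1 - h) - Real.log (1 - h)) y := by
  have hk : 0 < 1 - h := by linarith
  rw [qTail, qTail, ← ENNReal.ofReal_mul hk.le, hxy, add_sub_assoc', Real.exp_sub,
    Real.exp_log hk, mul_div_cancel₀ _ hk.ne']
  congr 2
  field_simp
  ring

section

variable (a b : ℝ) {c h : ℝ}

lemma map_S_withDensity_core (hc : 1 ≤ c) :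
    (volume.withDensity ({x : ℝ | |x| < 1}.indicator qCore)).map (S a c h) =
      volume.withDensity ({x : ℝ | |x| < 1}.indicator qCore) := by
  rw [map_withDensity_indicator_congr _ measurableSet_abs_lt_one _ (T' := id), Measure.map_id]
  intro x (hx : |x| < 1)
  simp [S, hx.trans_le hc]

lemma map_S_withDensity_tail_Ici (ha : 0 ≤ a) (hc : 0 ≤ c) (hh0 : 0 ≤ h) (hh1 : h < 1) :
    (volume.withDensity ((Ici c).indicator (qTail a b))).map (S a c h) =
      volume.withDensity ((Ici ((1 - h) * c + a * h)).indicator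
        (qTail (a / (1 - h)) (b + a ^ 2 * h / (1 - h) - Real.log (1 - h)))) := by
  have hk : 0 < 1 - h := by linarith
  rw [map_withDensity_indicator_congr _ measurableSet_Ici _ (T' := fun x => (1 - h) * x + a * h)]
  · refine map_affine_withDensity_indicator hk _ (measurable_qTail _ _) measurableSet_Ici
      (fun x => ?_) (fun x (hx : c ≤ x) => qTail_eq_ofReal_mul_qTail b hh1 ?_)
    · simp only [mem_Ici]
      constructor <;> intro <;> nlinarith
    · rw [abs_of_nonneg (hc.trans hx), abs_of_nonneg (by nlinarith [hc.trans hx])]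
  · intro x (hx : c ≤ x)
    simp [S, hx, le_abs_self x |>.trans' hx]

lemma map_S_withDensity_tail_Iic (ha : 0 ≤ a) (hc : 0 < c) (hh0 : 0 ≤ h) (hh1 : h < 1) :
    (volume.withDensity ((Iic (-c)).indicator (qTail a b))).map (S a c h) =
      volume.withDensity ((Iic (-((1 - h) * c + a * h))).indicator
        (qTail (a / (1 - h)) (b + a ^ 2 * h / (1 - h) - Real.log (1 - h)))) := by
  have hk : 0 < 1 - h := by linarith
  rw [map_withDensity_indicator_congr _ measurableSet_Iic _
    (T' := fun x => (1 - h) * x + -(a * h))]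
  · refine map_affine_withDensity_indicator hk _ (measurable_qTail _ _) measurableSet_Iic
      (fun x => ?_) (fun x (hx : x ≤ -c) => qTail_eq_ofReal_mul_qTail b hh1 ?_)
    · simp only [mem_Iic]
      constructor <;> intro <;> nlinarith
    · have hy : (1 - h) * x + -(a * h) ≤ 0 := by
        nlinarith [mul_nonneg hk.le (by linarith : 0 ≤ -x), mul_nonneg ha hh0]
      rw [abs_of_nonpos hy, abs_of_nonpos (by linarith : x ≤ 0)]
      ring
  · intro x (hx : x ≤ -c)
    have hxc : c ≤ |x| := by linarith [neg_le_abs x]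
    simp [S, hxc.not_gt, show ¬ c ≤ x by linarith, sub_eq_add_neg]

end

/-- induction step. For `a ≥ 1`, `c ≥ 1`, `b ∈ ℝ`, `h ∈ (0,1)`,
the pushforward of `q a b c · Lebesgue` under `S a c h` is `q a' b' c' · Lebesgue`
with `a' = a/(1-h)`, `b' = b + a²h/(1-h) - log(1-h)`, `c' = (1-h)c + a h`;
moreover `a' > a ≥ 1` and `c' ≥ 1`. -/
theorem forwardEuler_iterate_density
    (a b c h : ℝ) (ha : 1 ≤ a) (hc : 1 ≤ c) (hh0 : 0 < h) (hh1 : h < 1) :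
    Measure.map (S a c h) (volume.withDensity (q a b c)) =
      volume.withDensity
        (q (a / (1 - h)) (b + a ^ 2 * h / (1 - h) - Real.log (1 - h))
          ((1 - h) * c + a * h)) ∧
    a / (1 - h) > a ∧ a ≥ 1 ∧ (1 - h) * c + a * h ≥ 1 := by
  have hk : 0 < 1 - h := by linarith
  have hc' : 1 ≤ (1 - h) * c + a * h := by nlinarith
  refine ⟨?_, (lt_div_iff₀ hk).mpr (by nlinarith), ha, hc'⟩
  have hcore := measurable_qCore.indicator measurableSet_abs_lt_one
  rw [q_eq_indicator_add a b hc, q_eq_indicator_add _ _ hc',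
    withDensity_add_add _ hcore ((measurable_qTail _ _).indicator measurableSet_Ici),
    withDensity_add_add _ hcore ((measurable_qTail _ _).indicator measurableSet_Ici),
    Measure.map_add _ _ (measurable_S a c h), Measure.map_add _ _ (measurable_S a c h),
    map_S_withDensity_core a hc, map_S_withDensity_tail_Ici a b (by linarith) (by linarith)
      hh0.le hh1, map_S_withDensity_tail_Iic a b (by linarith) (by linarith) hh0.le hh1]
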